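/- Let T ≥ 1, h, b, p ≥ 0, w ∈ ℝ^T, q ∈ ℝ^T, μ ∈ ℝ^T, σ ∈ ℝ_{>0}^T, and define a_t = h + b + p·1{t=T}, s_t = √(Σ_{k=1}^t σ_k²), β_t = (Σ_{k=1}^t (μ_k − q_k))/s_t, and C_ω(q) = Σ_{t=1}^T [ (a_t·Φ(β_t) − h)·Σ_{k=1}^t (μ_k − q_k) + a_t·φ(β_t)·s_t + w_t q_t − p·μ_t ]. Then for every τ ∈ {1,...,T}, the partial derivative of C_ω(q) with respect to σ_τ equals Σ_{t=τ}^T a_t·φ(β_t)·σ_τ/s_t, and this quantity is nonnegative. -/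

import Mathlib

/-!
Only `s_t` with `t ≥ τ` depends on `σ_τ`, through `∂s_t/∂σ_τ = σ_τ / s_t`. The per-period cost
`(a Φ(M/s) - h) M + a φ(M/s) s` has `s`-derivative exactly `a φ(M/s)`: using `φ'(x) = -x φ(x)`, the
terms coming from `Φ(M/s)` and from `φ(M/s)` cancel.
-/

open MeasureTheory ProbabilityTheory
open scoped ENNReal NNReal

/-- The standard normal cumulative distribution function `Φ`. -/
noncomputable def stdNormalCDF (x : ℝ) : ℝ :=
  (gaussianReal 0 1 (Set.Iic x)).toReal

/-- The standard normal probability density function `φ`. -/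
noncomputable def stdNormalPDF (x : ℝ) : ℝ := gaussianPDFReal 0 1 x

/-- Closed-form expected cost `C_ω(q)` of the multi-period newsvendor problem under
independent normal demands, as a function of the parameter vectors `μv` and `σ`. -/
noncomputable def normalCost (T : ℕ) (h b p : ℝ) (w q σ μv : ℕ → ℝ) : ℝ :=
  ∑ t ∈ Finset.Icc 1 T,
    (((h + b + (if t = T then p else 0))
        * stdNormalCDF ((∑ k ∈ Finset.Icc 1 t, (μv k - q k))
            / Real.sqrt (∑ k ∈ Finset.Icc 1 t, (σ k) ^ 2)) - h)
      * (∑ k ∈ Finset.Icc 1 t, (μv k - q k))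
     + (h + b + (if t = T then p else 0))
        * stdNormalPDF ((∑ k ∈ Finset.Icc 1 t, (μv k - q k))
            / Real.sqrt (∑ k ∈ Finset.Icc 1 t, (σ k) ^ 2))
        * Real.sqrt (∑ k ∈ Finset.Icc 1 t, (σ k) ^ 2)
     + w t * q t - p * μv t)

open Finset

lemma stdNormalPDF_nonneg (x : ℝ) : 0 ≤ stdNormalPDF x :=
  gaussianPDFReal_nonneg 0 1 x

lemma stdNormalPDF_eq (x : ℝ) :
    stdNormalPDF x = (Real.sqrt (2 * Real.pi))⁻¹ * Real.exp (-x ^ 2 / 2) := by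
  simp [stdNormalPDF, gaussianPDFReal]

lemma continuous_stdNormalPDF : Continuous stdNormalPDF := by
  simp only [funext stdNormalPDF_eq]
  fun_prop

lemma stdNormalCDF_eq_integral (x : ℝ) :
    stdNormalCDF x = ∫ t in Set.Iic x, stdNormalPDF t := by
  rw [stdNormalCDF, gaussianReal_apply_eq_integral 0 one_ne_zero, ENNReal.toReal_ofReal]
  · rfl
  exact setIntegral_nonneg measurableSet_Iic fun t _ => stdNormalPDF_nonneg t

lemma stdNormalCDF_eq_add_intervalIntegral (x : ℝ) :
    stdNormalCDF x = stdNormalCDF 0 + ∫ t in (0 : ℝ)..x, stdNormalPDF t := by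
  have hint : Integrable stdNormalPDF := integrable_gaussianPDFReal 0 1
  rw [stdNormalCDF_eq_integral, stdNormalCDF_eq_integral,
    ← intervalIntegral.integral_Iic_sub_Iic hint.integrableOn hint.integrableOn]
  ring

lemma hasDerivAt_stdNormalCDF (x : ℝ) : HasDerivAt stdNormalCDF (stdNormalPDF x) x := by
  rw [funext stdNormalCDF_eq_add_intervalIntegral]
  exact (intervalIntegral.integral_hasDerivAt_right
    ((integrable_gaussianPDFReal 0 1).intervalIntegrable)
    (continuous_stdNormalPDF.stronglyMeasurableAtFilter _ _)
    continuous_stdNormalPDF.continuousAt).const_add _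

lemma hasDerivAt_stdNormalPDF (x : ℝ) :
    HasDerivAt stdNormalPDF (-x * stdNormalPDF x) x := by
  rw [funext stdNormalPDF_eq]
  have hexp : HasDerivAt (fun y : ℝ => -y ^ 2 / 2) (-x) x := by
    refine (((hasDerivAt_pow 2 x).neg).div_const 2).congr_deriv ?_
    norm_num
    ring
  refine ((hexp.exp).const_mul (Real.sqrt (2 * Real.pi))⁻¹).congr_deriv ?_
  beta_reduce
  ring

lemma hasDerivAt_mul_stdNormalCDF_div_add_mul_stdNormalPDF_div (M : ℝ) {s : ℝ} (hs : s ≠ 0) :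
    HasDerivAt (fun s => M * stdNormalCDF (M / s) + s * stdNormalPDF (M / s))
      (stdNormalPDF (M / s)) s := by
  have hβ : HasDerivAt (fun s => M / s) (-M / s ^ 2) s := by
    simpa [div_eq_mul_inv, neg_div] using (hasDerivAt_inv hs).const_mul M
  have hΦ := (hasDerivAt_stdNormalCDF (M / s)).comp s hβ
  have hφ := (hasDerivAt_stdNormalPDF (M / s)).comp s hβ
  refine ((hΦ.const_mul M).add ((hasDerivAt_id s).mul hφ)).congr_deriv ?_
  simp only [Function.comp_apply, id]
  field_simp
  ring

/-- The `t`-th summand of `normalCost` without the ordering and revenue terms, with `s = s_t`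
and `M = ∑_{k ≤ t} (μ_k - q_k)`. -/
noncomputable def normalPeriodCost (a h M s : ℝ) : ℝ :=
  (a * stdNormalCDF (M / s) - h) * M + a * stdNormalPDF (M / s) * s

lemma hasDerivAt_normalPeriodCost (a h M : ℝ) {s : ℝ} (hs : s ≠ 0) :
    HasDerivAt (normalPeriodCost a h M) (a * stdNormalPDF (M / s)) s := by
  have hcost : normalPeriodCost a h M =
      fun s => a * (M * stdNormalCDF (M / s) + s * stdNormalPDF (M / s)) - h * M := by
    funext s
    simp only [normalPeriodCost]
    ring
  rw [hcost]
  exact ((hasDerivAt_mul_stdNormalCDF_div_add_mul_stdNormalPDF_div M hs).const_mul a).sub_const _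

section UpdateSumSq

variable {ι : Type*} {S : Finset ι} {σ : ι → ℝ} {τ : ι}

lemma sum_sq_pos_of_mem (hτ : τ ∈ S) (hστ : σ τ ≠ 0) : 0 < ∑ k ∈ S, σ k ^ 2 :=
  sum_pos' (fun k _ => sq_nonneg (σ k)) ⟨τ, hτ, by positivity⟩

variable [DecidableEq ι]

lemma sum_sq_update_of_mem (hτ : τ ∈ S) (x : ℝ) :
    ∑ k ∈ S, Function.update σ τ x k ^ 2 = x ^ 2 + ∑ k ∈ S \ {τ}, σ k ^ 2 :=
  calc ∑ k ∈ S, Function.update σ τ x k ^ 2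
      = ∑ k ∈ S, Function.update (fun k => σ k ^ 2) τ (x ^ 2) k :=
        sum_congr rfl fun k _ => Function.apply_update (fun _ y => y ^ 2) σ τ x k
    _ = x ^ 2 + ∑ k ∈ S \ {τ}, σ k ^ 2 := sum_update_of_mem hτ _ _

lemma sum_sq_update_of_notMem (hτ : τ ∉ S) (x : ℝ) :
    ∑ k ∈ S, Function.update σ τ x k ^ 2 = ∑ k ∈ S, σ k ^ 2 :=
  sum_congr rfl fun k hk => by rw [Function.update_of_ne (ne_of_mem_of_not_mem hk hτ)]

lemma hasDerivAt_sqrt_sum_sq_update (hτ : τ ∈ S) (hστ : σ τ ≠ 0) :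
    HasDerivAt (fun x => √(∑ k ∈ S, Function.update σ τ x k ^ 2))
      (σ τ / √(∑ k ∈ S, σ k ^ 2)) (σ τ) := by
  have hsum : HasDerivAt (fun x => ∑ k ∈ S, Function.update σ τ x k ^ 2) (2 * σ τ) (σ τ) := by
    simp only [sum_sq_update_of_mem hτ]
    refine ((hasDerivAt_pow 2 (σ τ)).add_const _).congr_deriv ?_
    norm_num
  have hval : ∑ k ∈ S, Function.update σ τ (σ τ) k ^ 2 = ∑ k ∈ S, σ k ^ 2 := by simp
  have hpos := sum_sq_pos_of_mem hτ hστ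
  refine (hsum.sqrt (hval ▸ hpos.ne')).congr_deriv ?_
  rw [hval]
  field_simp

lemma hasDerivAt_normalPeriodCost_sqrt_sum_sq_update (a h M : ℝ) (S : Finset ι)
    (hστ : σ τ ≠ 0) :
    HasDerivAt (fun x => normalPeriodCost a h M √(∑ k ∈ S, Function.update σ τ x k ^ 2))
      (if τ ∈ S then
        a * stdNormalPDF (M / √(∑ k ∈ S, σ k ^ 2)) * σ τ / √(∑ k ∈ S, σ k ^ 2)
      else 0) (σ τ) := by
  split_ifs with hτ
  · have hs : √(∑ k ∈ S, σ k ^ 2) ≠ 0 := Real.sqrt_ne_zero'.mpr (sum_sq_pos_of_mem hτ hστ)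
    rw [mul_div_assoc]
    exact (hasDerivAt_normalPeriodCost a h M hs).comp_of_eq _
      (hasDerivAt_sqrt_sum_sq_update hτ hστ) (by simp)
  · simp only [sum_sq_update_of_notMem hτ]
    exact hasDerivAt_const _ _

end UpdateSumSq

theorem stmt_11_general
    (T : ℕ)
    (h b p : ℝ) (hh : 0 ≤ h) (hb : 0 ≤ b) (hp : 0 ≤ p)
    (w q μv σ : ℕ → ℝ) (hσ : ∀ t, 1 ≤ t → t ≤ T → 0 < σ t) :
    ∀ τ, 1 ≤ τ → τ ≤ T →
      HasDerivAt (fun x : ℝ => normalCost T h b p w q (Function.update σ τ x) μv)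
        (∑ t ∈ Finset.Icc τ T,
          (h + b + (if t = T then p else 0))
            * stdNormalPDF ((∑ k ∈ Finset.Icc 1 t, (μv k - q k))
                / Real.sqrt (∑ k ∈ Finset.Icc 1 t, (σ k) ^ 2))
            * σ τ / Real.sqrt (∑ k ∈ Finset.Icc 1 t, (σ k) ^ 2))
        (σ τ) ∧
      0 ≤ ∑ t ∈ Finset.Icc τ T,
          (h + b + (if t = T then p else 0))
            * stdNormalPDF ((∑ k ∈ Finset.Icc 1 t, (μv k - q k))
                / Real.sqrt (∑ k ∈ Finset.Icc 1 t, (σ k) ^ 2))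
            * σ τ / Real.sqrt (∑ k ∈ Finset.Icc 1 t, (σ k) ^ 2) := by
  intro τ hτ1 hτT
  have hστ : 0 < σ τ := hσ τ hτ1 hτT
  refine ⟨?_, sum_nonneg fun t _ => ?_⟩
  · have hterm := fun t (_ : t ∈ Icc 1 T) =>
      ((hasDerivAt_normalPeriodCost_sqrt_sum_sq_update (h + b + (if t = T then p else 0)) h
        (∑ k ∈ Icc 1 t, (μv k - q k)) (Icc 1 t) hστ.ne').add_const (w t * q t)).sub_const
        (p * μv t)
    have hperiods : {t ∈ Icc 1 T | τ ∈ Icc 1 t} = Icc τ T := by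
      ext t
      simp only [mem_filter, mem_Icc]
      omega
    rw [← hperiods, sum_filter]
    exact HasDerivAt.fun_sum hterm
  · have ha : 0 ≤ h + b + (if t = T then p else 0) := by split_ifs <;> positivity
    have hφ := stdNormalPDF_nonneg ((∑ k ∈ Icc 1 t, (μv k - q k)) / √(∑ k ∈ Icc 1 t, σ k ^ 2))
    positivity

/-- The partial derivative of the normal-demand newsvendor cost `C_ω(q)` with respect to
`σ τ` equals `∑_{t=τ}^T a t * φ(β t) * σ τ / s t`, and this quantity is nonnegative. -/
theorem stmt_11
    (T : ℕ) (hT : 1 ≤ T)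
    (h b p : ℝ) (hh : 0 ≤ h) (hb : 0 ≤ b) (hp : 0 ≤ p)
    (w q μv σ : ℕ → ℝ) (hσ : ∀ t, 1 ≤ t → t ≤ T → 0 < σ t) :
    ∀ τ, 1 ≤ τ → τ ≤ T →
      HasDerivAt (fun x : ℝ => normalCost T h b p w q (Function.update σ τ x) μv)
        (∑ t ∈ Finset.Icc τ T,
          (h + b + (if t = T then p else 0))
            * stdNormalPDF ((∑ k ∈ Finset.Icc 1 t, (μv k - q k))
                / Real.sqrt (∑ k ∈ Finset.Icc 1 t, (σ k) ^ 2))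
            * σ τ / Real.sqrt (∑ k ∈ Finset.Icc 1 t, (σ k) ^ 2))
        (σ τ) ∧
      0 ≤ ∑ t ∈ Finset.Icc τ T,
          (h + b + (if t = T then p else 0))
            * stdNormalPDF ((∑ k ∈ Finset.Icc 1 t, (μv k - q k))
                / Real.sqrt (∑ k ∈ Finset.Icc 1 t, (σ k) ^ 2))
            * σ τ / Real.sqrt (∑ k ∈ Finset.Icc 1 t, (σ k) ^ 2) :=
  stmt_11_general T h b p hh hb hp w q μv σ hσ
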